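/- Every two-stack sortable permutation π of length n ≥ 1 is obtained in exactly one way by the constructions C1 and C2: either there is a unique pair (π1, π2), with each of π1, π2 empty or a 2SSP, such that π = C1(π1, π2); or there is a unique triple (π1, π2, i), with π1 and π2 nonempty 2SSPs and 1 ≤ i ≤ slmax(π2), such that π = C2(π1, π2, i); and these two cases are mutually exclusive. -/

import Mathlib

/-!
Write `π = A · n · B`. Since `S(π) = S(A) · S(B) · n`, and by Knuth one pass of the stack sorts
a sequence iff it avoids 231, `π` is two-stack sortable iff `S(A) · S(B)` avoids 231. If `A` is
nonempty, its maximum `M` ends `S(A)`, so every other entry of `A` lies below every entry of `B`: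
with `k = |A|`, the entries of `A` are `{1, …, k-1} ∪ {M}` and those of `B` are
`{k, …, n-1} ∖ {M}`. Standardizing `A` and `B` gives `π₁` and `π₂`. If `M = k` this is `C1`;
if `M = k + a` with `a > 0`, avoiding 231 through `M` forces `a` to be a left-to-right maximum
of `S(π₂)`, which is `C2`. Conversely `n` splits `π` uniquely, the maximum `k + a` of the left
block recovers `a`, and all the shifts are injective, which gives uniqueness and exclusivity.
-/

namespace TSP

theorem foldr_max_mem {α : Type} [LinearOrder α] (x : α) (l : List α) :
    l.foldr max x ∈ x :: l := by
  induction l with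
  | nil => simp
  | cons a t ih =>
    simp only [List.foldr_cons]
    rcases max_choice a (t.foldr max x) with h | h <;> rw [h]
    · simp
    · rcases List.mem_cons.mp ih with h' | h'
      · rw [h']; simp
      · exact List.mem_cons.mpr (Or.inr (List.mem_cons.mpr (Or.inr h')))

theorem length_takeWhile_lt {α : Type} [DecidableEq α] {m : α} {l : List α}
    (h : m ∈ l) : (l.takeWhile (· ≠ m)).length < l.length := by
  have hd : l.dropWhile (· ≠ m) ≠ [] := by
    intro hnil
    have := List.dropWhile_eq_nil_iff.mp hnil m h
    simp at this
  have hsum : (l.takeWhile (· ≠ m)).length + (l.dropWhile (· ≠ m)).length = l.length := by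
    rw [← List.length_append, List.takeWhile_append_dropWhile]
  have : 0 < (l.dropWhile (· ≠ m)).length := List.length_pos_iff.mpr hd
  omega

theorem length_tail_dropWhile_lt {α : Type} [DecidableEq α] {m : α} {l : List α}
    (h : l ≠ []) : ((l.dropWhile (· ≠ m)).tail).length < l.length := by
  have hsum : (l.takeWhile (· ≠ m)).length + (l.dropWhile (· ≠ m)).length = l.length := by
    rw [← List.length_append, List.takeWhile_append_dropWhile]
  have h2 : ((l.dropWhile (· ≠ m)).tail).length = (l.dropWhile (· ≠ m)).length - 1 :=
    List.length_tail
  have : 0 < l.length := List.length_pos_iff.mpr h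
  omega

/-- The stack-sorting operator `S`: `S(ε) = ε`, and if `A` is nonempty with
largest element `m` and `A = A_L · (m) · A_R`, then `S(A) = S(A_L) · S(A_R) · (m)`. -/
def S {α : Type} [LinearOrder α] : List α → List α
  | [] => []
  | x :: l =>
    let m := l.foldr max x
    S ((x :: l).takeWhile (· ≠ m)) ++ S (((x :: l).dropWhile (· ≠ m)).tail) ++ [m]
termination_by l => l.length
decreasing_by
  · simp only [List.foldr_attach]; exact length_takeWhile_lt (foldr_max_mem x l)
  · exact length_tail_dropWhile_lt (by simp)

/-- The identity permutation `id_n = (1, 2, …, n)` as a list. -/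
def idPerm (n : ℕ) : List ℕ := List.range' 1 n

/-- `l` is a permutation of `{1, …, n}` (viewed as a sequence). -/
def IsPermOf (n : ℕ) (l : List ℕ) : Prop := l.Perm (idPerm n)

/-- `l` is a two-stack sortable permutation (of `{1, …, len l}`). -/
def Is2SS (l : List ℕ) : Prop := IsPermOf l.length l ∧ S (S l) = idPerm l.length

/-- `σ^{+k}`: add `k` to every entry. -/
def shift (k : ℕ) (l : List ℕ) : List ℕ := l.map (· + k)

/-- `σ^{+(k1,m,k2)}`: add `k1` to every entry strictly smaller than `m`, `k2` to the others. -/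
def shift3 (k1 m k2 : ℕ) (l : List ℕ) : List ℕ :=
  l.map (fun a => if a < m then a + k1 else a + k2)

/-- Standardization `P(A)`: the permutation of `{1,…,len A}` in the same relative order. -/
def stand (l : List ℕ) : List ℕ := l.map (fun a => (l.filter (fun b => b ≤ a)).length)

/-- Avoidance of the pattern 231: no positions `i < j < k` with `l(k) < l(i) < l(j)`. -/
def Avoids231 (l : List ℕ) : Prop :=
  ¬ ∃ i j k, i < j ∧ j < k ∧ k < l.length ∧
      l.getD k 0 < l.getD i 0 ∧ l.getD i 0 < l.getD j 0

/-- The list of values of the left-to-right maxima of `l`, in order. -/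
def lrMaxima (l : List ℕ) : List ℕ :=
  ((List.range l.length).filter
    (fun i => (l.take i).all (fun b => b < l.getD i 0))).map (fun i => l.getD i 0)

/-- `lmax`: the number of left-to-right maxima. -/
def lmax (l : List ℕ) : ℕ :=
  (List.range l.length).countP (fun i => (l.take i).all (fun b => b < l.getD i 0))

/-- `rmax`: the number of right-to-left maxima. -/
def rmax (l : List ℕ) : ℕ :=
  (List.range l.length).countP (fun i => (l.drop (i+1)).all (fun b => b < l.getD i 0))

/-- `asc`: the number of ascents. -/
def asc (l : List ℕ) : ℕ :=
  (List.range (l.length - 1)).countP (fun i => l.getD i 0 < l.getD (i+1) 0)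

/-- `des`: the number of descents. -/
def des (l : List ℕ) : ℕ :=
  (List.range (l.length - 1)).countP (fun i => l.getD (i+1) 0 < l.getD i 0)

/-- `slmax(π)`: the number of left-to-right maxima of `S(π)`. -/
def slmax (l : List ℕ) : ℕ := lmax (S l)

/-- `sldes(π)`: the number of entries `a` that precede `a - 1` in `S(π)`. -/
def sldes (l : List ℕ) : ℕ :=
  (List.range (S l).length).countP
    (fun i => ((S l).drop (i+1)).any (fun b => b + 1 = (S l).getD i 0))

/-- The construction `C1(π1, π2) = π1 · (k+ℓ+1) · π2^{+k}`. -/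
def C1 (p1 p2 : List ℕ) : List ℕ :=
  p1 ++ (p1.length + p2.length + 1) :: shift p1.length p2

/-- The `i`-th left-to-right maximum `a_i` of `S(π2)` (1-indexed). -/
def lrm (p2 : List ℕ) (i : ℕ) : ℕ := (lrMaxima (S p2)).getD (i - 1) 0

/-- The construction `C2(π1, π2, i) = π1^{+(0,k,a_i)} · (k+ℓ+1) · π2^{+(k-1,a_i+1,k)}`. -/
def C2 (p1 p2 : List ℕ) (i : ℕ) : List ℕ :=
  shift3 0 p1.length (lrm p2 i) p1 ++
    (p1.length + p2.length + 1) :: shift3 (p1.length - 1) (lrm p2 i + 1) p1.length p2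

/-- The decomposition `D(π) = (P(π_ℓ), P(π_r))`, where `π = π_ℓ · (n) · π_r`
with `n` the largest entry of `π`. -/
def D (l : List ℕ) : List ℕ × List ℕ :=
  match l with
  | [] => ([], [])
  | x :: t =>
    let m := t.foldr max x
    (stand ((x :: t).takeWhile (· ≠ m)), stand (((x :: t).dropWhile (· ≠ m)).tail))

open scoped List

theorem exists_perm_eq_map_of_perm_map {α β : Type} [Nonempty α] {f : α → β}
    (hf : f.Injective) {l : List β} {L : List α} (h : l ~ L.map f) :
    ∃ p, p ~ L ∧ l = p.map f := by
  have hinv : Function.invFun f ∘ f = id := funext (Function.leftInverse_invFun hf)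
  refine ⟨l.map (Function.invFun f), ?_, ?_⟩
  · simpa [hinv] using h.map (Function.invFun f)
  · rw [List.map_map, eq_comm]
    refine (List.map_congr_left fun b hb => ?_).trans (List.map_id l)
    obtain ⟨a, -, rfl⟩ := List.mem_map.mp (h.mem_iff.mp hb)
    exact congrArg f (congrFun hinv a)

theorem append_cons_inj_of_nodup {α : Type} {x₁ z₁ x₂ z₂ : List α} {a : α}
    (h : (x₁ ++ a :: z₁).Nodup) (he : x₁ ++ a :: z₁ = x₂ ++ a :: z₂) : x₁ = x₂ ∧ z₁ = z₂ := by
  rw [List.nodup_middle, List.nodup_cons, List.mem_append, not_or] at h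
  obtain ⟨hx, -, hz⟩ := (List.append_cons_inj_of_notMem h.1.1 h.1.2).mp he
  exact ⟨hx, hz⟩

section StackSorting

variable {α : Type} [LinearOrder α]

theorem le_foldr_max (x : α) (l : List α) : ∀ a ∈ x :: l, a ≤ l.foldr max x := by
  induction l with
  | nil => simp
  | cons b t ih =>
    intro a ha
    rcases List.mem_cons.mp ha with rfl | ha
    · exact (ih a List.mem_cons_self).trans (le_max_right _ _)
    rcases List.mem_cons.mp ha with rfl | ha
    · exact le_max_left _ _
    · exact (ih a (List.mem_cons_of_mem _ ha)).trans (le_max_right _ _)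

theorem S_append_cons {A B : List α} {m : α} (hA : ∀ a ∈ A, a < m) (hB : ∀ b ∈ B, b ≤ m) :
    S (A ++ m :: B) = S A ++ S B ++ [m] := by
  obtain ⟨x, l, hxl⟩ := List.exists_cons_of_ne_nil (l := A ++ m :: B) (by simp)
  have hle : ∀ a ∈ x :: l, a ≤ m := by
    rw [← hxl]
    intro a ha
    rcases List.mem_append.mp ha with ha | ha
    · exact (hA a ha).le
    · rcases List.mem_cons.mp ha with rfl | ha
      exacts [le_rfl, hB a ha]
  have hmax : l.foldr max x = m :=
    le_antisymm (hle _ (foldr_max_mem x l)) (le_foldr_max x l m (by simp [← hxl]))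
  have hAm : ∀ a ∈ A, a ≠ m := fun a ha => (hA a ha).ne
  rw [hxl, S, hmax, ← hxl, List.takeWhile_append_of_pos (by simpa using hAm),
    List.dropWhile_append_of_pos (by simpa using hAm)]
  simp

theorem exists_eq_append_cons_max {l : List α} (hl : l ≠ []) :
    ∃ A m B, l = A ++ m :: B ∧ (∀ a ∈ A, a < m) ∧ ∀ b ∈ B, b ≤ m := by
  obtain ⟨x, t, rfl⟩ := List.exists_cons_of_ne_nil hl
  obtain ⟨A, B, hmA, hsplit, -⟩ := List.exists_erase_eq (foldr_max_mem x t)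
  have hle := le_foldr_max x t
  refine ⟨A, _, B, hsplit, fun a ha => ?_, fun b hb => hle b (by simp [hsplit, hb])⟩
  exact (hle a (by simp [hsplit, ha])).lt_of_ne (by rintro rfl; exact hmA ha)

theorem induction_on_max_split {motive : List α → Prop} (nil : motive [])
    (split : ∀ A m B, (∀ a ∈ A, a < m) → (∀ b ∈ B, b ≤ m) →
      motive A → motive B → motive (A ++ m :: B))
    (l : List α) : motive l := by
  induction hn : l.length using Nat.strong_induction_on generalizing l with
  | _ n ih =>
    rcases eq_or_ne l [] with rfl | hl
    · exact nil
    obtain ⟨A, m, B, rfl, hA, hB⟩ := exists_eq_append_cons_max hl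
    simp only [List.length_append, List.length_cons] at hn
    exact split A m B hA hB (ih _ (by omega) A rfl) (ih _ (by omega) B rfl)

theorem S_perm (l : List α) : S l ~ l := by
  induction l using induction_on_max_split with
  | nil => simp [S]
  | split A m B hA hB ihA ihB =>
    rw [S_append_cons hA hB, List.append_assoc]
    exact ihA.append ((ihB.append_right [m]).trans (List.perm_append_singleton m B))

theorem S_map {β : Type} [LinearOrder β] {f : α → β} (hf : StrictMono f) (l : List α) :
    S (l.map f) = (S l).map f := by
  induction l using induction_on_max_split with
  | nil => simp [S]
  | split A m B hA hB ihA ihB =>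
    have hA' : ∀ a ∈ A.map f, a < f m := by simpa using fun a ha => hf (hA a ha)
    have hB' : ∀ b ∈ B.map f, b ≤ f m := by simpa using fun b hb => hf.monotone (hB b hb)
    rw [List.map_append, List.map_cons, S_append_cons hA' hB', S_append_cons hA hB, ihA, ihB]
    simp

def Contains231 (l : List α) : Prop := ∃ a b c, [a, b, c] <+ l ∧ c < a ∧ a < b

theorem Contains231.mono {l l' : List α} (h : l <+ l') : Contains231 l → Contains231 l' :=
  fun ⟨a, b, c, hs, hca, hab⟩ => ⟨a, b, c, hs.trans h, hca, hab⟩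

theorem Contains231.map {β : Type} [LinearOrder β] {f : α → β} (hf : StrictMono f)
    {l : List α} : Contains231 l → Contains231 (l.map f) :=
  fun ⟨a, b, c, hs, hca, hab⟩ => ⟨f a, f b, f c, hs.map f, hf hca, hf hab⟩

theorem contains231_append_cons_iff {A B : List α} {m : α} (hA : ∀ a ∈ A, a < m)
    (hB : ∀ b ∈ B, b < m) :
    Contains231 (A ++ m :: B) ↔ Contains231 A ∨ Contains231 B ∨ ∃ a ∈ A, ∃ b ∈ B, b < a := by
  constructor
  · rintro ⟨a, b, c, hs, hca, hab⟩
    have hle : ∀ x ∈ A ++ m :: B, x ≤ m := by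
      simp only [List.mem_append, List.mem_cons]
      rintro x (hx | rfl | hx)
      exacts [(hA x hx).le, le_rfl, (hB x hx).le]
    have hbm : b ≤ m := hle b (hs.subset (by simp))
    have hcB : ∀ {L}, L <+ m :: B → c ∈ L → c ∈ B := fun hL hc =>
      (List.mem_cons.mp (hL.subset hc)).resolve_left ((hca.trans hab).trans_le hbm).ne
    obtain ⟨u, v, huv, hu, hv⟩ := List.sublist_append_iff.mp hs
    rcases u with _ | ⟨_, _ | ⟨_, _ | ⟨_, _ | ⟨_, _⟩⟩⟩⟩ <;>
      simp only [List.nil_append, List.cons_append, List.cons.injEq] at huv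
    · subst huv
      rcases List.sublist_cons_iff.mp hv with hv | ⟨r, hr, hrB⟩
      · exact Or.inr (Or.inl ⟨a, b, c, hv, hca, hab⟩)
      · exact absurd (List.cons.inj hr).1 (hab.trans_le hbm).ne
    · obtain ⟨rfl, rfl⟩ := huv
      exact Or.inr (Or.inr ⟨a, hu.subset (by simp), c, hcB hv (by simp), hca⟩)
    · obtain ⟨rfl, rfl, rfl⟩ := huv
      exact Or.inr (Or.inr ⟨a, hu.subset (by simp), c, hcB hv (by simp), hca⟩)
    · obtain ⟨rfl, rfl, rfl, rfl⟩ := huv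
      exact Or.inl ⟨a, b, c, hu, hca, hab⟩
    · simp at huv
  · rintro (h | h | ⟨a, ha, b, hb, hba⟩)
    · exact h.mono (List.sublist_append_left _ _)
    · exact h.mono ((List.sublist_cons_self m B).trans (List.sublist_append_right A _))
    · exact ⟨a, m, b, (List.singleton_sublist.mpr ha).append
        ((List.singleton_sublist.mpr hb).cons_cons m), hba, hA a ha⟩

/-- Knuth's characterisation of stack-sortable sequences. -/
theorem pairwise_S_iff_not_contains231 {l : List α} (hl : l.Nodup) :
    (S l).Pairwise (· < ·) ↔ ¬ Contains231 l := by
  induction l using induction_on_max_split with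
  | nil => simp [Contains231, S]
  | split A m B hA hB ihA ihB =>
    rw [List.nodup_middle, List.nodup_cons, List.nodup_append] at hl
    obtain ⟨hm, hndA, hndB, hdisj⟩ := hl
    have hB' : ∀ b ∈ B, b < m :=
      fun b hb => (hB b hb).lt_of_ne (by rintro rfl; exact hm (List.mem_append_right _ hb))
    rw [S_append_cons hA hB, contains231_append_cons_iff hA hB', not_or, not_or, ← ihA hndA,
      ← ihB hndB]
    simp only [List.pairwise_append, List.pairwise_singleton, List.mem_singleton,
      (S_perm _).mem_iff]
    have hcross : (∀ a ∈ A, ∀ b ∈ B, a < b) ↔ ¬∃ a ∈ A, ∃ b ∈ B, b < a := by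
      simp only [not_exists, not_and, not_lt]
      exact forall₂_congr fun a ha => forall₂_congr fun b hb =>
        ⟨le_of_lt, fun h => h.lt_of_ne (hdisj a ha b hb)⟩
    have hlt : ∀ a ∈ S A ++ S B, ∀ b, b = m → a < b := by
      rintro a ha _ rfl
      rcases List.mem_append.mp ha with ha | ha
      exacts [hA a ((S_perm A).mem_iff.mp ha), hB' a ((S_perm B).mem_iff.mp ha)]
    rw [← hcross]
    tauto

theorem exists_max_of_not_contains231 {A B : List α} (hA : A ≠ [])
    (h : ¬ Contains231 (S A ++ S B)) :
    ∃ M ∈ A, (∀ a ∈ A, a ≤ M) ∧ ∀ a ∈ A, a ≠ M → ∀ b ∈ B, a ≤ b := by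
  obtain ⟨A₁, M, A₂, rfl, h₁, h₂⟩ := exists_eq_append_cons_max hA
  refine ⟨M, by simp, fun a ha => ?_, fun a ha haM b hb => not_lt.mp fun hba => h ?_⟩
  · rcases List.mem_append.mp ha with ha | ha
    · exact (h₁ a ha).le
    · rcases List.mem_cons.mp ha with rfl | ha
      exacts [le_rfl, h₂ a ha]
  · have ha' : a ∈ S A₁ ++ S A₂ := by
      simpa [(S_perm _).mem_iff, haM] using ha
    refine ⟨a, M, b, ?_, hba, ?_⟩
    · rw [S_append_cons h₁ h₂]
      exact ((List.singleton_sublist.mpr ha').append (List.Sublist.refl [M])).append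
        (List.singleton_sublist.mpr ((S_perm B).mem_iff.mpr hb))
    · simp only [List.mem_append, List.mem_cons] at ha
      rcases ha with ha | rfl | ha
      exacts [h₁ a ha, absurd rfl haM, (h₂ a ha).lt_of_ne haM]

theorem perm_of_append_perm_of_forall_le {l r L₁ L₂ : List α} (h : l ++ r ~ L₁ ++ L₂)
    (hL : (L₁ ++ L₂).Pairwise (· ≤ ·)) (hlen : l.length = L₁.length)
    (hlr : ∀ a ∈ l, ∀ b ∈ r, a ≤ b) : l ~ L₁ ∧ r ~ L₂ := by
  have hl := List.perm_insertionSort (· ≤ ·) l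
  have hr := List.perm_insertionSort (· ≤ ·) r
  have hsorted : (l.insertionSort (· ≤ ·) ++ r.insertionSort (· ≤ ·)).Pairwise (· ≤ ·) :=
    List.pairwise_append.mpr ⟨List.pairwise_insertionSort _ _, List.pairwise_insertionSort _ _,
      fun a ha b hb => hlr a (hl.mem_iff.mp ha) b (hr.mem_iff.mp hb)⟩
  have heq := ((hl.append hr).trans h).eq_of_pairwise' hsorted hL
  obtain ⟨h₁, h₂⟩ := List.append_inj heq (by rw [hl.length_eq, hlen])
  exact ⟨hl.symm.trans (h₁ ▸ .refl _), hr.symm.trans (h₂ ▸ .refl _)⟩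

end StackSorting

theorem is2SS_iff {p : List ℕ} : Is2SS p ↔ IsPermOf p.length p ∧ ¬ Contains231 (S p) := by
  refine and_congr_right fun hp => ?_
  have hnd : (S p).Nodup := (S_perm p).nodup_iff.mpr (hp.nodup_iff.mpr List.nodup_range')
  rw [← pairwise_S_iff_not_contains231 hnd, idPerm]
  refine ⟨fun h => h ▸ List.pairwise_lt_range', fun h => ?_⟩
  exact ((S_perm _).trans ((S_perm p).trans hp)).eq_of_pairwise
    (fun _ _ _ _ h₁ h₂ => absurd (h₁.trans h₂) (lt_irrefl _)) h List.pairwise_lt_range'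

theorem Is2SS.nodup {p : List ℕ} (h : Is2SS p) : p.Nodup :=
  h.1.nodup_iff.mpr List.nodup_range'

theorem Is2SS.mem_iff {p : List ℕ} (h : Is2SS p) {z : ℕ} : z ∈ p ↔ 1 ≤ z ∧ z ≤ p.length := by
  rw [h.1.mem_iff, idPerm, List.mem_range'_1]
  omega

theorem Is2SS.exists_split {π : List ℕ} (h : Is2SS π) (hπ : π ≠ []) :
    ∃ A B, π = A ++ (A.length + B.length + 1) :: B ∧
      A ++ B ~ List.range' 1 (A.length + B.length) ∧ ¬ Contains231 (S A ++ S B) := by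
  obtain ⟨hperm, h231⟩ := is2SS_iff.mp h
  rw [IsPermOf, idPerm] at hperm
  generalize hn : π.length = n at hperm
  have hpos : 0 < n := hn ▸ List.length_pos_iff.mpr hπ
  obtain ⟨A, B, rfl⟩ := List.append_of_mem
    (hperm.mem_iff.mpr (List.mem_range'_1.mpr ⟨hpos, by omega⟩))
  have hlen : A.length + B.length + 1 = n := by simp at hn; omega
  have hnd : (n :: (A ++ B)).Nodup :=
    List.nodup_middle.mp (hperm.nodup_iff.mpr List.nodup_range')
  have hlt : ∀ z ∈ A ++ B, z < n := by
    intro z hz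
    have hzπ : z ∈ A ++ n :: B := List.perm_middle.mem_iff.mpr (List.mem_cons_of_mem n hz)
    have := List.mem_range'_1.mp (hperm.mem_iff.mp hzπ)
    have hzn : z ≠ n := by rintro rfl; exact (List.nodup_cons.mp hnd).1 hz
    omega
  refine ⟨A, B, by rw [hlen], ?_, fun hAB => h231 ?_⟩
  · have hrange : List.range' 1 n ~ n :: List.range' 1 (A.length + B.length) := by
      rw [← hlen, List.range'_concat]
      simp [Nat.add_comm]
    exact (List.perm_cons _).mp (List.perm_middle.symm.trans (hperm.trans hrange))
  · rw [S_append_cons (fun a ha => hlt a (by simp [ha]))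
      (fun b hb => (hlt b (by simp [hb])).le)]
    exact hAB.mono (List.sublist_append_left _ _)

def shift3Fun (k₁ m k₂ a : ℕ) : ℕ := if a < m then a + k₁ else a + k₂

theorem shift3_eq_map (k₁ m k₂ : ℕ) (l : List ℕ) :
    shift3 k₁ m k₂ l = l.map (shift3Fun k₁ m k₂) :=
  rfl

theorem strictMono_shift3Fun {k₁ k₂ : ℕ} (h : k₁ ≤ k₂) (m : ℕ) :
    StrictMono (shift3Fun k₁ m k₂) := by
  intro a b hab
  unfold shift3Fun
  split_ifs <;> omega

theorem map_shift3Fun_range'_left {k : ℕ} (hk : 1 ≤ k) (a : ℕ) :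
    (List.range' 1 k).map (shift3Fun 0 k a) = List.range' 1 (k - 1) ++ [k + a] := by
  obtain ⟨j, rfl⟩ := Nat.exists_eq_add_of_le' hk
  rw [List.range'_concat, List.map_append]
  congr 1
  · refine (List.map_congr_left fun z hz => ?_).trans (List.map_id _)
    have := List.mem_range'_1.mp hz
    simp only [shift3Fun, if_pos (show z < j + 1 by omega), add_zero, id]
  · simp [shift3Fun]
    omega

theorem map_shift3Fun_range'_right {k a ℓ : ℕ} (hk : 1 ≤ k) (ha : a ≤ ℓ) :
    (List.range' 1 ℓ).map (shift3Fun (k - 1) (a + 1) k) =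
      List.range' k a ++ List.range' (k + a + 1) (ℓ - a) := by
  obtain ⟨c, rfl⟩ := Nat.exists_eq_add_of_le ha
  rw [← List.range'_append_1, List.map_append]
  congr 1
  · rw [show k = (k - 1) + 1 by omega, Nat.add_sub_cancel]
    refine (List.map_congr_left fun z hz => ?_).trans (List.map_add_range' _ _ _)
    have := List.mem_range'_1.mp hz
    simp only [shift3Fun, if_pos (show z < a + 1 by omega)]
    omega
  · rw [show k + a + 1 = k + (1 + a) by omega, Nat.add_sub_cancel_left]
    refine (List.map_congr_left fun z hz => ?_).trans (List.map_add_range' _ _ _)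
    have := List.mem_range'_1.mp hz
    simp only [shift3Fun, if_neg (show ¬ z < a + 1 by omega)]
    omega

theorem perm_erase_and_perm_cons {A B : List ℕ} {M : ℕ}
    (hAB : A ++ B ~ List.range' 1 (A.length + B.length)) (hM : M ∈ A)
    (hmax : ∀ a ∈ A, a ≤ M) (hcross : ∀ a ∈ A, a ≠ M → ∀ b ∈ B, a ≤ b) :
    A.erase M ~ List.range' 1 (A.length - 1) ∧ M :: B ~ List.range' A.length (B.length + 1) := by
  have hndA : A.Nodup := (hAB.nodup_iff.mpr List.nodup_range').of_append_left
  have hk : 1 ≤ A.length := List.length_pos_of_mem hM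
  have hrange : List.range' 1 (A.length - 1) ++ List.range' A.length (B.length + 1) =
      List.range' 1 (A.length + B.length) := by
    rw [show A.length + B.length = (A.length - 1) + (B.length + 1) by omega,
      ← List.range'_append_1 (s := 1) (m := A.length - 1),
      show 1 + (A.length - 1) = A.length by omega]
  refine perm_of_append_perm_of_forall_le ?_ (hrange ▸ List.pairwise_le_range')
    (by simp [List.length_erase_of_mem hM]) ?_
  · rw [hrange]
    exact List.perm_middle.trans (((List.perm_cons_erase hM).symm.append_right B).trans hAB)
  · intro a ha b hb
    obtain ⟨haM, haA⟩ := (hndA.mem_erase_iff).mp ha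
    rcases List.mem_cons.mp hb with hbM | hb
    exacts [hbM ▸ hmax a haA, hcross a haA haM b hb]

theorem exists_shift3_decomposition {A B : List ℕ} (hA : A ≠ [])
    (hAB : A ++ B ~ List.range' 1 (A.length + B.length)) (h231 : ¬ Contains231 (S A ++ S B)) :
    ∃ a p₁ p₂, a ≤ B.length ∧ p₁ ~ List.range' 1 A.length ∧ p₂ ~ List.range' 1 B.length ∧
      A = shift3 0 A.length a p₁ ∧ B = shift3 (A.length - 1) (a + 1) A.length p₂ ∧
      A.length + a ∈ A := by
  obtain ⟨M, hM, hmax, hcross⟩ := exists_max_of_not_contains231 hA h231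
  obtain ⟨hA', hMB⟩ := perm_erase_and_perm_cons hAB hM hmax hcross
  have hk : 1 ≤ A.length := List.length_pos_of_mem hM
  have hkM := List.mem_range'_1.mp (hMB.mem_iff.mp List.mem_cons_self)
  obtain ⟨a, rfl⟩ : ∃ a, M = A.length + a := ⟨M - A.length, by omega⟩
  have hpA : A ~ (List.range' 1 A.length).map (shift3Fun 0 A.length a) := by
    rw [map_shift3Fun_range'_left hk]
    exact (List.perm_cons_erase hM).trans
      ((List.perm_append_singleton _ _).symm.trans (hA'.append_right _))
  have hpB : B ~ (List.range' 1 B.length).map (shift3Fun (A.length - 1) (a + 1) A.length) := by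
    rw [map_shift3Fun_range'_right hk (by omega)]
    have hsplit : List.range' A.length (B.length + 1) = List.range' A.length a ++
        (A.length + a) :: List.range' (A.length + a + 1) (B.length - a) := by
      rw [← List.range'_succ, List.range'_append_1]
      congr 1
      omega
    exact (List.perm_cons _).mp (hMB.trans (hsplit ▸ List.perm_middle))
  obtain ⟨p₁, hp₁, hA₁⟩ :=
    exists_perm_eq_map_of_perm_map (strictMono_shift3Fun (Nat.zero_le _) _).injective hpA
  obtain ⟨p₂, hp₂, hB₂⟩ :=
    exists_perm_eq_map_of_perm_map (strictMono_shift3Fun (Nat.sub_le _ 1) _).injective hpB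
  exact ⟨a, p₁, p₂, by omega, hp₁, hp₂, hA₁, hB₂, hM⟩

theorem length_lrMaxima (l : List ℕ) : (lrMaxima l).length = lmax l := by
  simp [lrMaxima, lmax, List.countP_eq_length_filter]

theorem mem_of_mem_lrMaxima {l : List ℕ} {a : ℕ} (h : a ∈ lrMaxima l) : a ∈ l := by
  obtain ⟨i, hi, rfl⟩ := List.mem_map.mp h
  rw [List.getD_eq_getElem _ _ (List.mem_range.mp (List.mem_filter.mp hi).1)]
  exact List.getElem_mem _

theorem mem_lrMaxima_of_forall_lt {u v : List ℕ} {a : ℕ} (h : ∀ b ∈ u, b < a) :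
    a ∈ lrMaxima (u ++ a :: v) := by
  have hlen : u.length < (u ++ a :: v).length := by simp
  have hget : (u ++ a :: v).getD u.length 0 = a := by
    rw [List.getD_eq_getElem _ _ hlen, List.getElem_append_right le_rfl]
    simp
  refine List.mem_map.mpr ⟨u.length, List.mem_filter.mpr ⟨List.mem_range.mpr hlen, ?_⟩, hget⟩
  rw [List.take_left, hget]
  exact List.all_eq_true.mpr fun b hb => by simpa using h b hb

theorem nodup_lrMaxima {l : List ℕ} (hl : l.Nodup) : (lrMaxima l).Nodup := by
  refine (List.nodup_range.filter _).map_on fun i hi j hj hij => ?_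
  have hi' := List.mem_range.mp (List.mem_filter.mp hi).1
  have hj' := List.mem_range.mp (List.mem_filter.mp hj).1
  rw [List.getD_eq_getElem _ _ hi', List.getD_eq_getElem _ _ hj'] at hij
  exact (hl.getElem_inj_iff).mp hij

theorem lrm_mem {p : List ℕ} {i : ℕ} (hi : 1 ≤ i) (hi' : i ≤ slmax p) : lrm p i ∈ p := by
  have hlt : i - 1 < (lrMaxima (S p)).length := by rw [length_lrMaxima, ← slmax]; omega
  rw [lrm, List.getD_eq_getElem _ _ hlt]
  exact (S_perm p).mem_iff.mp (mem_of_mem_lrMaxima (List.getElem_mem hlt))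

theorem lrm_injOn {p : List ℕ} (hp : p.Nodup) {i j : ℕ} (hi : 1 ≤ i) (hi' : i ≤ slmax p)
    (hj : 1 ≤ j) (hj' : j ≤ slmax p) (h : lrm p i = lrm p j) : i = j := by
  have hlt : ∀ {i}, i ≤ slmax p → i - 1 < (lrMaxima (S p)).length := fun h => by
    rw [length_lrMaxima, ← slmax]; omega
  rw [lrm, lrm, List.getD_eq_getElem _ _ (hlt hi'), List.getD_eq_getElem _ _ (hlt hj')] at h
  have := (nodup_lrMaxima ((S_perm p).nodup_iff.mpr hp)).getElem_inj_iff.mp h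
  omega

theorem exists_lrm_eq {p : List ℕ} {a : ℕ} (ha : a ∈ lrMaxima (S p)) :
    ∃ i, 1 ≤ i ∧ i ≤ slmax p ∧ lrm p i = a := by
  obtain ⟨j, hj, rfl⟩ := List.getElem_of_mem ha
  refine ⟨j + 1, by omega, ?_, by rw [lrm, Nat.add_sub_cancel, List.getD_eq_getElem _ _ hj]⟩
  rw [slmax, ← length_lrMaxima]
  omega

theorem mem_lrMaxima_of_not_contains231 {L L' : List ℕ} {f : ℕ → ℕ} {a x : ℕ} (hL : L.Nodup)
    (ha : a ∈ L) (hx : x ∈ L') (hfa : f a < x) (hfb : ∀ b, a < b → x < f b)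
    (h : ¬ Contains231 (L' ++ L.map f)) : a ∈ lrMaxima L := by
  obtain ⟨u, v, rfl⟩ := List.append_of_mem ha
  refine mem_lrMaxima_of_forall_lt fun b hb => ?_
  have hba : b ≠ a := by
    rintro rfl
    exact (List.nodup_middle.mp hL |> List.nodup_cons.mp).1 (List.mem_append_left _ hb)
  refine (lt_or_gt_of_ne hba).resolve_right fun hab => h ⟨x, f b, f a, ?_, hfa, hfb b hab⟩
  rw [List.map_append, List.map_cons]
  exact (List.singleton_sublist.mpr hx).append
    ((List.singleton_sublist.mpr (List.mem_map_of_mem hb)).append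
      ((List.nil_sublist _).cons_cons _))

theorem mem_lrMaxima_S_of_not_contains231_shift3 {L p : List ℕ} {k a : ℕ} (hk : 1 ≤ k)
    (hp : p.Nodup) (ha : a ∈ p) (hka : k + a ∈ L)
    (h : ¬ Contains231 (S L ++ S (shift3 (k - 1) (a + 1) k p))) : a ∈ lrMaxima (S p) := by
  refine mem_lrMaxima_of_not_contains231 (f := shift3Fun (k - 1) (a + 1) k)
    ((S_perm p).nodup_iff.mpr hp) ((S_perm p).mem_iff.mpr ha) ((S_perm L).mem_iff.mpr hka)
    ?_ (fun b hb => ?_) ?_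
  · simp only [shift3Fun, if_pos (Nat.lt_succ_self a)]
    omega
  · simp only [shift3Fun, if_neg (show ¬ b < a + 1 by omega)]
    omega
  · rwa [← S_map (strictMono_shift3Fun (Nat.sub_le k 1) _), ← shift3_eq_map]

theorem is2SS_of_not_contains231_S_map {p : List ℕ} {f : ℕ → ℕ} (hf : StrictMono f)
    (hp : p ~ List.range' 1 p.length) (h : ¬ Contains231 (S (p.map f))) : Is2SS p :=
  is2SS_iff.mpr ⟨hp, fun hc => h (S_map hf p ▸ hc.map hf)⟩

theorem shift3_zero_zero (m : ℕ) (l : List ℕ) : shift3 0 m 0 l = l := by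
  simp [shift3]

theorem shift3_pred_one {k : ℕ} {l : List ℕ} (hl : ∀ z ∈ l, 1 ≤ z) :
    shift3 (k - 1) 1 k l = shift k l :=
  List.map_congr_left fun z hz => by have := hl z hz; simp only [if_neg (show ¬ z < 1 by omega)]

def C1Rep (π : List ℕ) (p : List ℕ × List ℕ) : Prop :=
  (p.1 = [] ∨ Is2SS p.1) ∧ (p.2 = [] ∨ Is2SS p.2) ∧ π = C1 p.1 p.2

def C2Rep (π : List ℕ) (q : List ℕ × List ℕ × ℕ) : Prop :=
  (q.1 ≠ [] ∧ Is2SS q.1) ∧ (q.2.1 ≠ [] ∧ Is2SS q.2.1) ∧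
    1 ≤ q.2.2 ∧ q.2.2 ≤ slmax q.2.1 ∧ π = C2 q.1 q.2.1 q.2.2

theorem Is2SS.exists_C1Rep_or_C2Rep {π : List ℕ} (h : Is2SS π) (hπ : π ≠ []) :
    (∃ p, C1Rep π p) ∨ ∃ q, C2Rep π q := by
  obtain ⟨A, B, hπAB, hAB, h231⟩ := h.exists_split hπ
  have h231A : ¬ Contains231 (S A) := fun hc => h231 (hc.mono (List.sublist_append_left _ _))
  have h231B : ¬ Contains231 (S B) := fun hc => h231 (hc.mono (List.sublist_append_right _ _))
  rcases eq_or_ne A [] with rfl | hA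
  · have hB : Is2SS B := is2SS_iff.mpr ⟨by simpa [IsPermOf, idPerm] using hAB, h231B⟩
    exact Or.inl ⟨([], B), Or.inl rfl, Or.inr hB, by simpa [C1, shift] using hπAB⟩
  obtain ⟨a, p₁, p₂, ha, hp₁, hp₂, hA₁, hB₂, hmem⟩ := exists_shift3_decomposition hA hAB h231
  have hlen₁ : p₁.length = A.length := by simpa using hp₁.length_eq
  have hlen₂ : p₂.length = B.length := by simpa using hp₂.length_eq
  have hk : 1 ≤ A.length := List.length_pos_iff.mpr hA
  have hf₁ := strictMono_shift3Fun (Nat.zero_le a) A.length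
  have hf₂ := strictMono_shift3Fun (Nat.sub_le A.length 1) (a + 1)
  have h₁ : Is2SS p₁ :=
    is2SS_of_not_contains231_S_map hf₁ (hlen₁ ▸ hp₁) (by rwa [← shift3_eq_map, ← hA₁])
  have h₂ : Is2SS p₂ :=
    is2SS_of_not_contains231_S_map hf₂ (hlen₂ ▸ hp₂) (by rwa [← shift3_eq_map, ← hB₂])
  rcases Nat.eq_zero_or_pos a with rfl | ha₀
  · refine Or.inl ⟨(p₁, p₂), Or.inr h₁, Or.inr h₂, ?_⟩
    rw [shift3_zero_zero] at hA₁
    rw [shift3_pred_one fun z hz => (List.mem_range'_1.mp (hp₂.mem_iff.mp hz)).1] at hB₂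
    rw [hπAB, C1, hlen₁, hlen₂, ← hA₁, ← hB₂]
  · have hlr : a ∈ lrMaxima (S p₂) :=
      mem_lrMaxima_S_of_not_contains231_shift3 hk h₂.nodup
        (h₂.mem_iff.mpr ⟨ha₀, by omega⟩) hmem (by rwa [← hB₂])
    obtain ⟨i, hi, hi', rfl⟩ := exists_lrm_eq hlr
    refine Or.inr ⟨(p₁, p₂, i), ⟨?_, h₁⟩, ⟨?_, h₂⟩, hi, hi', ?_⟩
    · exact List.length_pos_iff.mp (show 0 < p₁.length by omega)
    · exact List.length_pos_iff.mp (show 0 < p₂.length by omega)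
    · rw [hπAB, C2, hlen₁, hlen₂, ← hA₁, ← hB₂]

theorem isGreatest_shift3_left {p : List ℕ} (h : Is2SS p) (hne : p ≠ []) (a : ℕ) :
    IsGreatest {z | z ∈ shift3 0 p.length a p} (p.length + a) := by
  have hk : 0 < p.length := List.length_pos_iff.mpr hne
  refine ⟨List.mem_map.mpr ⟨p.length, h.mem_iff.mpr ⟨hk, le_rfl⟩, by simp⟩, ?_⟩
  rintro _ hy
  obtain ⟨z, hz, rfl⟩ := List.mem_map.mp hy
  have := h.mem_iff.mp hz
  split_ifs <;> omega

theorem length_C1 (p₁ p₂ : List ℕ) : (C1 p₁ p₂).length = p₁.length + p₂.length + 1 := by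
  simp [C1, shift]
  omega

theorem length_C2 (p₁ p₂ : List ℕ) (i : ℕ) :
    (C2 p₁ p₂ i).length = p₁.length + p₂.length + 1 := by
  simp [C2, shift3]
  omega

theorem C1Rep.unique {π : List ℕ} (hπ : π.Nodup) {p q : List ℕ × List ℕ} (hp : C1Rep π p)
    (hq : C1Rep π q) : p = q := by
  obtain ⟨-, -, rfl⟩ := hp
  obtain ⟨-, -, hpq⟩ := hq
  have hlen := length_C1 p.1 p.2 ▸ length_C1 q.1 q.2 ▸ congrArg List.length hpq
  rw [C1, C1, hlen] at hpq
  rw [C1, hlen] at hπ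
  obtain ⟨h₁, h₂⟩ := append_cons_inj_of_nodup hπ hpq
  rw [shift, shift, h₁] at h₂
  exact Prod.ext h₁ (List.map_injective_iff.mpr (add_left_injective _) h₂)

theorem C2Rep.unique {π : List ℕ} (hπ : π.Nodup) {p q : List ℕ × List ℕ × ℕ} (hp : C2Rep π p)
    (hq : C2Rep π q) : p = q := by
  obtain ⟨⟨hne₁, h₁⟩, ⟨-, h₂⟩, hi, hi', rfl⟩ := hp
  obtain ⟨⟨hne₁', h₁'⟩, -, hj, hj', hpq⟩ := hq
  have hlen := length_C2 p.1 p.2.1 p.2.2 ▸ length_C2 q.1 q.2.1 q.2.2 ▸ congrArg List.length hpq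
  rw [C2, C2, hlen] at hpq
  rw [C2, hlen] at hπ
  obtain ⟨hleft, hright⟩ := append_cons_inj_of_nodup hπ hpq
  have hk : p.1.length = q.1.length := by simpa [shift3] using congrArg List.length hleft
  have ha : lrm p.2.1 p.2.2 = lrm q.2.1 q.2.2 := by
    have hmax : IsGreatest {z | z ∈ shift3 0 p.1.length (lrm p.2.1 p.2.2) p.1}
        (q.1.length + lrm q.2.1 q.2.2) := by
      rw [hleft]
      exact isGreatest_shift3_left h₁' hne₁' _
    have := (isGreatest_shift3_left h₁ hne₁ _).unique hmax
    omega
  rw [hk, ha, shift3_eq_map, shift3_eq_map] at hleft hright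
  have heq₁ := List.map_injective_iff.mpr (strictMono_shift3Fun (Nat.zero_le _) _).injective hleft
  have heq₂ := List.map_injective_iff.mpr
    (strictMono_shift3Fun (Nat.sub_le _ 1) _).injective hright
  have heq₃ := lrm_injOn h₂.nodup hi hi' hj (heq₂ ▸ hj')
    (ha.trans (by rw [heq₂]))
  exact Prod.ext heq₁ (Prod.ext heq₂ heq₃)

theorem C1Rep.not_C2Rep {π : List ℕ} (hπ : π.Nodup) {p : List ℕ × List ℕ}
    {q : List ℕ × List ℕ × ℕ} (hp : C1Rep π p) (hq : C2Rep π q) : False := by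
  obtain ⟨hp₁, -, rfl⟩ := hp
  obtain ⟨⟨hne₁, h₁⟩, ⟨-, h₂⟩, hi, hi', hpq⟩ := hq
  have hlen := length_C1 p.1 p.2 ▸ length_C2 q.1 q.2.1 q.2.2 ▸ congrArg List.length hpq
  rw [C1, C2, ← hlen] at hpq
  rw [C1] at hπ
  obtain ⟨hleft, -⟩ := append_cons_inj_of_nodup hπ hpq
  have hk : p.1.length = q.1.length := by simpa [shift3] using congrArg List.length hleft
  have ha := (h₂.mem_iff.mp (lrm_mem hi hi')).1
  have hmem : q.1.length + lrm q.2.1 q.2.2 ∈ p.1 := hleft ▸ (isGreatest_shift3_left h₁ hne₁ _).1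
  rcases hp₁ with hnil | hp₁
  · simp [hnil] at hmem
  · have := (hp₁.mem_iff.mp hmem).2
    omega

/-- every two-stack sortable permutation `π` of length `n ≥ 1` is obtained
in exactly one way by the constructions `C1` and `C2`: either by a unique pair
`(π1, π2)` via `C1`, or by a unique triple `(π1, π2, i)` via `C2`, and the two cases are
mutually exclusive. -/
theorem unique_construction (n : ℕ) (hn : 1 ≤ n) (π : List ℕ) (hlen : π.length = n)
    (h : Is2SS π) :
    ((∃! p : List ℕ × List ℕ,
        (p.1 = [] ∨ Is2SS p.1) ∧ (p.2 = [] ∨ Is2SS p.2) ∧ π = C1 p.1 p.2) ∨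
      (∃! q : List ℕ × List ℕ × ℕ,
        (q.1 ≠ [] ∧ Is2SS q.1) ∧ (q.2.1 ≠ [] ∧ Is2SS q.2.1) ∧
        1 ≤ q.2.2 ∧ q.2.2 ≤ slmax q.2.1 ∧ π = C2 q.1 q.2.1 q.2.2)) ∧
    ¬ ((∃ p : List ℕ × List ℕ,
        (p.1 = [] ∨ Is2SS p.1) ∧ (p.2 = [] ∨ Is2SS p.2) ∧ π = C1 p.1 p.2) ∧
      (∃ q : List ℕ × List ℕ × ℕ,
        (q.1 ≠ [] ∧ Is2SS q.1) ∧ (q.2.1 ≠ [] ∧ Is2SS q.2.1) ∧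
        1 ≤ q.2.2 ∧ q.2.2 ≤ slmax q.2.1 ∧ π = C2 q.1 q.2.1 q.2.2)) := by
  have hπ : π ≠ [] := List.length_pos_iff.mp (by omega)
  refine ⟨?_, fun ⟨⟨p, hp⟩, ⟨q, hq⟩⟩ => C1Rep.not_C2Rep h.nodup hp hq⟩
  rcases h.exists_C1Rep_or_C2Rep hπ with ⟨p, hp⟩ | ⟨q, hq⟩
  · exact Or.inl ⟨p, hp, fun p' hp' => C1Rep.unique h.nodup hp' hp⟩
  · exact Or.inr ⟨q, hq, fun q' hq' => C2Rep.unique h.nodup hq' hq⟩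

end TSP
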